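/- Let k ≥ 4 be an even integer and j ≥ 0 an integer, and define Ψ : ℝ → ℝ as the j-th iterated derivative of the function x ↦ Γ'(x)/Γ(x) − Γ'(k−x)/Γ(k−x), where Γ is the real Gamma function and Γ' its derivative. Then Ψ(s) > 0 for every s with k/2 < s ≤ k−2, Ψ(k/2) ≥ 0, and Ψ is strictly increasing on the interval [k/2, k−2]. -/

import Mathlib

/-!
Write `ψ = Γ'/Γ`. On `(0, K)` the Gauss approximants `log Γₙ(y) + log Γₙ(K - y)` converge to
`log Γ(y) + log Γ(K - y)` and their derivatives converge locally uniformly, which gives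
`ψ(x) - ψ(K - x) = ∑ᵢ (1/(K - x + i) - 1/(x + i))`. This series may be differentiated termwise, so
`Ψ(x) = ∑ᵢ j! (1/(K - x + i)^(j+1) - (-1)^j/(x + i)^(j+1))`. For `K/2 ≤ x < K` we have
`K - x + i ≤ x + i`, so every term is nonnegative, and positive when `x > K/2`; the same series for
`j + 1` is `Ψ'`, which is therefore positive on `(K/2, K)`.
-/

open Real Set Filter Topology
open scoped Nat

/-- The `j`-th derivative of `x ↦ 1 / (K - x + i) - 1 / (x + i)`. -/
noncomputable def psiTerm (K : ℝ) (j i : ℕ) (x : ℝ) : ℝ :=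
  j ! * (1 / (K - x + i) ^ (j + 1) - (-1) ^ j / (x + i) ^ (j + 1))

noncomputable def psiSeries (K : ℝ) (j : ℕ) (x : ℝ) : ℝ := ∑' i : ℕ, psiTerm K j i x

theorem HasDerivAt.const_div_pow_succ {f : ℝ → ℝ} {f' x : ℝ} (c : ℝ) (hf : HasDerivAt f f' x)
    (hx : f x ≠ 0) (n : ℕ) :
    HasDerivAt (fun y => c / f y ^ (n + 1)) (-(c * (n + 1) * f') / f x ^ (n + 2)) x := by
  refine ((hasDerivAt_const x c).fun_div (hf.fun_pow (n + 1)) (pow_ne_zero _ hx)).congr_deriv ?_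
  rw [Nat.add_sub_cancel, ← pow_mul, div_eq_div_iff (pow_ne_zero _ hx) (pow_ne_zero _ hx)]
  push_cast
  ring

theorem hasDerivAt_psiTerm {K x : ℝ} (hx : x ∈ Ioo 0 K) (j i : ℕ) :
    HasDerivAt (psiTerm K j i) (psiTerm K (j + 1) i x) x := by
  have hi : (0 : ℝ) ≤ i := i.cast_nonneg
  have hA : K - x + i ≠ 0 := by linarith [hx.2]
  have hB : x + i ≠ 0 := by linarith [hx.1]
  have dA := (((hasDerivAt_id' x).const_sub K).add_const (i : ℝ)).const_div_pow_succ 1 hA j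
  have dB := ((hasDerivAt_id' x).add_const (i : ℝ)).const_div_pow_succ ((-1) ^ j) hB j
  refine ((dA.sub dB).const_mul (j ! : ℝ)).congr_deriv ?_
  simp only [psiTerm, Nat.factorial_succ]
  push_cast
  field_simp
  ring

theorem summable_one_div_add_pow {c : ℝ} (hc : 0 ≤ c) {p : ℕ} (hp : 1 < p) :
    Summable fun i : ℕ => 1 / (c + i) ^ p :=
  ((summable_one_div_nat_add_rpow c p).2 (by exact_mod_cast hp)).congr fun i => by
    rw [abs_of_nonneg (by positivity), Real.rpow_natCast, add_comm]

section bounds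

variable {K ε x : ℝ}

theorem abs_psiTerm_le (hε : 0 < ε) (hx : x ∈ Icc ε (K - ε)) (j i : ℕ) :
    |psiTerm K j i x| ≤ 2 * j ! / (ε + i) ^ (j + 1) := by
  have hi : (0 : ℝ) ≤ i := i.cast_nonneg
  have hA : ε + i ≤ K - x + i := by linarith [hx.2]
  have hB : ε + i ≤ x + i := by linarith [hx.1]
  have hε' : 0 < ε + i := by linarith
  have hA' : 0 < K - x + i := by linarith
  have hB' : 0 < x + i := by linarith
  calc |psiTerm K j i x|
      ≤ j ! * (|1 / (K - x + i) ^ (j + 1)| + |(-1) ^ j / (x + i) ^ (j + 1)|) := by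
        rw [psiTerm, abs_mul, Nat.abs_cast]; gcongr; exact abs_sub _ _
    _ = j ! * (1 / (K - x + i) ^ (j + 1) + 1 / (x + i) ^ (j + 1)) := by
        simp only [abs_div, abs_pow, abs_neg, abs_one, one_pow, abs_of_pos hA', abs_of_pos hB']
    _ ≤ j ! * (1 / (ε + i) ^ (j + 1) + 1 / (ε + i) ^ (j + 1)) := by gcongr
    _ = 2 * j ! / (ε + i) ^ (j + 1) := by ring

theorem abs_psiTerm_zero_le (hε : 0 < ε) (hx : x ∈ Icc ε (K - ε)) (i : ℕ) :
    |psiTerm K 0 i x| ≤ K / (ε + i) ^ 2 := by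
  have hi : (0 : ℝ) ≤ i := i.cast_nonneg
  have hA : ε + i ≤ K - x + i := by linarith [hx.2]
  have hB : ε + i ≤ x + i := by linarith [hx.1]
  have hε' : 0 < ε + i := by linarith
  have hA' : 0 < K - x + i := by linarith
  have hB' : 0 < x + i := by linarith
  have hpsi : psiTerm K 0 i x = (2 * x - K) / ((K - x + i) * (x + i)) := by
    rw [psiTerm]; field_simp; ring
  rw [hpsi, abs_div, abs_of_pos (mul_pos hA' hB'), sq]
  refine div_le_div₀ (by linarith [hx.1, hx.2]) ?_ (by positivity) (mul_le_mul hA hB hε'.le hA'.le)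
  rw [abs_le]; constructor <;> linarith [hx.1, hx.2]

theorem exists_summable_bound_psiTerm (hε : 0 < ε) (j : ℕ) :
    ∃ u : ℕ → ℝ, Summable u ∧ ∀ x ∈ Icc ε (K - ε), ∀ i, |psiTerm K j i x| ≤ u i := by
  cases j with
  | zero =>
    refine ⟨_, ?_, fun x hx => abs_psiTerm_zero_le hε hx⟩
    simpa only [mul_one_div] using (summable_one_div_add_pow hε.le one_lt_two).mul_left K
  | succ j =>
    refine ⟨_, ?_, fun x hx => abs_psiTerm_le hε hx (j + 1)⟩
    simpa only [mul_one_div] using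
      (summable_one_div_add_pow hε.le (by omega : 1 < j + 1 + 1)).mul_left (2 * (j + 1)! : ℝ)

end bounds

theorem exists_pos_mem_Ioo_sub {K x : ℝ} (hx : x ∈ Ioo 0 K) : ∃ ε > 0, x ∈ Ioo ε (K - ε) := by
  have h := lt_min hx.1 (sub_pos.2 hx.2)
  refine ⟨min x (K - x) / 2, half_pos h, ?_, ?_⟩ <;>
    linarith [min_le_left x (K - x), min_le_right x (K - x)]

section series

variable {K x : ℝ}

theorem summable_psiTerm (hx : x ∈ Ioo 0 K) (j : ℕ) : Summable (psiTerm K j · x) := by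
  obtain ⟨ε, hε, hxε⟩ := exists_pos_mem_Ioo_sub hx
  obtain ⟨u, hu, hbound⟩ := exists_summable_bound_psiTerm (K := K) hε j
  exact .of_norm_bounded hu (hbound x (Ioo_subset_Icc_self hxε))

theorem hasDerivAt_psiSeries (hx : x ∈ Ioo 0 K) (j : ℕ) :
    HasDerivAt (psiSeries K j) (psiSeries K (j + 1) x) x := by
  obtain ⟨ε, hε, hxε⟩ := exists_pos_mem_Ioo_sub hx
  obtain ⟨u, hu, hbound⟩ := exists_summable_bound_psiTerm (K := K) hε (j + 1)
  exact hasDerivAt_tsum_of_isPreconnected hu isOpen_Ioo isPreconnected_Ioo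
    (fun i y hy => hasDerivAt_psiTerm ⟨by linarith [hy.1], by linarith [hy.2]⟩ j i)
    (fun i y hy => hbound y (Ioo_subset_Icc_self hy) i) hxε (summable_psiTerm hx j) hxε

theorem tendstoUniformlyOn_psiSeries {ε : ℝ} (hε : 0 < ε) (j : ℕ) :
    TendstoUniformlyOn (fun N x => ∑ i ∈ Finset.range N, psiTerm K j i x) (psiSeries K j) atTop
      (Icc ε (K - ε)) := by
  obtain ⟨u, hu, hbound⟩ := exists_summable_bound_psiTerm (K := K) hε j
  exact tendstoUniformlyOn_tsum_nat hu fun i x hx => hbound x hx i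

end series

noncomputable def digammaDiff (K x : ℝ) : ℝ :=
  deriv Gamma x / Gamma x - deriv Gamma (K - x) / Gamma (K - x)

section digamma

open BohrMollerup

variable {K x : ℝ}

theorem hasDerivAt_log_Gamma (hx : 0 < x) :
    HasDerivAt (fun y => log (Gamma y)) (deriv Gamma x / Gamma x) x :=
  (differentiableAt_Gamma fun m => ((neg_nonpos.2 m.cast_nonneg).trans_lt hx).ne').hasDerivAt.log
    (Gamma_pos_of_pos hx).ne'

theorem hasDerivAt_logGammaSeq (hx : 0 < x) (n : ℕ) :
    HasDerivAt (logGammaSeq · n) (log n - ∑ m ∈ Finset.range (n + 1), 1 / (x + m)) x := by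
  have hsum : HasDerivAt (fun y => ∑ m ∈ Finset.range (n + 1), log (y + m))
      (∑ m ∈ Finset.range (n + 1), 1 / (x + m)) x :=
    .fun_sum fun m _ => ((hasDerivAt_id' x).add_const (m : ℝ)).log (by positivity)
  exact ((((hasDerivAt_id' x).mul_const (log n)).add_const (log n !)).sub hsum).congr_deriv
    (by ring)

theorem hasDerivAt_log_Gamma_add_log_Gamma_sub (hx : x ∈ Ioo 0 K) :
    HasDerivAt (fun y => log (Gamma y) + log (Gamma (K - y))) (digammaDiff K x) x := by
  have h := (hasDerivAt_log_Gamma (sub_pos.2 hx.2)).comp x ((hasDerivAt_id' x).const_sub K)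
  exact ((hasDerivAt_log_Gamma hx.1).add h).congr_deriv (by rw [digammaDiff]; ring)

theorem hasDerivAt_logGammaSeq_add_logGammaSeq_sub (hx : x ∈ Ioo 0 K) (n : ℕ) :
    HasDerivAt (fun y => logGammaSeq y n + logGammaSeq (K - y) n)
      (∑ i ∈ Finset.range (n + 1), psiTerm K 0 i x) x := by
  have h := (hasDerivAt_logGammaSeq (sub_pos.2 hx.2) n).comp x ((hasDerivAt_id' x).const_sub K)
  refine ((hasDerivAt_logGammaSeq hx.1 n).add h).congr_deriv ?_
  simp [psiTerm]

theorem digammaDiff_eq_psiSeries (hx : x ∈ Ioo 0 K) : digammaDiff K x = psiSeries K 0 x := by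
  obtain ⟨ε, hε, hxε⟩ := exists_pos_mem_Ioo_sub hx
  have hsub : ∀ y ∈ Ioo ε (K - ε), y ∈ Ioo 0 K := fun y hy =>
    ⟨by linarith [hy.1], by linarith [hy.2]⟩
  have hunif : TendstoUniformlyOn (fun n y => ∑ i ∈ Finset.range (n + 1), psiTerm K 0 i y)
      (psiSeries K 0) atTop (Ioo ε (K - ε)) := fun u hu =>
    (tendsto_add_atTop_nat 1).eventually
      ((tendstoUniformlyOn_psiSeries hε 0).mono Ioo_subset_Icc_self u hu)
  have hlim : ∀ y ∈ Ioo ε (K - ε), Tendsto (fun n => logGammaSeq y n + logGammaSeq (K - y) n)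
      atTop (𝓝 (log (Gamma y) + log (Gamma (K - y)))) := fun y hy =>
    (tendsto_log_gamma (hsub y hy).1).add (tendsto_log_gamma (sub_pos.2 (hsub y hy).2))
  exact (hasDerivAt_log_Gamma_add_log_Gamma_sub hx).unique <|
    hasDerivAt_of_tendstoUniformlyOn isOpen_Ioo hunif
      (.of_forall fun n y hy => hasDerivAt_logGammaSeq_add_logGammaSeq_sub (hsub y hy) n) hlim hxε

end digamma

theorem iteratedDeriv_digammaDiff_eqOn {K : ℝ} (j : ℕ) :
    EqOn (iteratedDeriv j (digammaDiff K)) (psiSeries K j) (Ioo 0 K) := by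
  induction j with
  | zero => exact fun x hx => digammaDiff_eq_psiSeries hx
  | succ j ih =>
    intro x hx
    rw [iteratedDeriv_succ, (ih.eventuallyEq_of_mem (isOpen_Ioo.mem_nhds hx)).deriv_eq,
      (hasDerivAt_psiSeries hx j).deriv]

section positivity

variable {K s : ℝ}

theorem psiTerm_nonneg (hs : K / 2 ≤ s) (hsK : s < K) (j i : ℕ) : 0 ≤ psiTerm K j i s := by
  have hi : (0 : ℝ) ≤ i := i.cast_nonneg
  have hA : 0 < K - s + i := by linarith
  have hB : 0 < s + i := by linarith
  refine mul_nonneg (by positivity) (sub_nonneg.2 ?_)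
  calc (-1) ^ j / (s + i) ^ (j + 1)
      ≤ 1 / (s + i) ^ (j + 1) := by gcongr; exact (le_abs_self _).trans (abs_neg_one_pow j).le
    _ ≤ 1 / (K - s + i) ^ (j + 1) := by gcongr; linarith

theorem psiTerm_pos (hs : K / 2 < s) (hsK : s < K) (j i : ℕ) : 0 < psiTerm K j i s := by
  have hi : (0 : ℝ) ≤ i := i.cast_nonneg
  have hA : 0 < K - s + i := by linarith
  have hB : 0 < s + i := by linarith
  refine mul_pos (by positivity) (sub_pos.2 ?_)
  calc (-1) ^ j / (s + i) ^ (j + 1)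
      ≤ 1 / (s + i) ^ (j + 1) := by gcongr; exact (le_abs_self _).trans (abs_neg_one_pow j).le
    _ < 1 / (K - s + i) ^ (j + 1) := by gcongr; linarith

theorem psiSeries_nonneg (hs : K / 2 ≤ s) (hsK : s < K) (j : ℕ) : 0 ≤ psiSeries K j s :=
  tsum_nonneg (psiTerm_nonneg hs hsK j)

theorem psiSeries_pos (hs : K / 2 < s) (hsK : s < K) (j : ℕ) : 0 < psiSeries K j s :=
  (summable_psiTerm ⟨by linarith, hsK⟩ j).tsum_pos (fun i => (psiTerm_pos hs hsK j i).le) 0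
    (psiTerm_pos hs hsK j 0)

end positivity

theorem psi_pos_and_strictMonoOn
    (k : ℕ) (hk4 : 4 ≤ k) (j : ℕ)
    (Ψ : ℝ → ℝ)
    (hΨ : Ψ = iteratedDeriv j
      (fun x : ℝ => deriv Real.Gamma x / Real.Gamma x -
        deriv Real.Gamma ((k : ℝ) - x) / Real.Gamma ((k : ℝ) - x))) :
    (∀ s : ℝ, (k : ℝ) / 2 < s → s ≤ (k : ℝ) - 2 → 0 < Ψ s) ∧
      0 ≤ Ψ ((k : ℝ) / 2) ∧
      StrictMonoOn Ψ (Set.Icc ((k : ℝ) / 2) ((k : ℝ) - 2)) := by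
  have hk : (4 : ℝ) ≤ k := by exact_mod_cast hk4
  have hΨeq : EqOn Ψ (psiSeries k j) (Ioo 0 k) := hΨ ▸ iteratedDeriv_digammaDiff_eqOn j
  have hderiv : ∀ x ∈ Ioo (0 : ℝ) k, HasDerivAt Ψ (psiSeries k (j + 1) x) x := fun x hx =>
    (hasDerivAt_psiSeries hx j).congr_of_eventuallyEq
      (hΨeq.eventuallyEq_of_mem (isOpen_Ioo.mem_nhds hx))
  have hsub : Icc ((k : ℝ) / 2) (k - 2) ⊆ Ioo 0 k := fun s hs =>
    ⟨by linarith [hs.1], by linarith [hs.2]⟩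
  refine ⟨fun s hs hsk => ?_, ?_, ?_⟩
  · rw [hΨeq (hsub ⟨hs.le, hsk⟩)]
    exact psiSeries_pos hs (by linarith) j
  · rw [hΨeq (hsub ⟨le_rfl, by linarith⟩)]
    exact psiSeries_nonneg le_rfl (by linarith) j
  · refine strictMonoOn_of_hasDerivWithinAt_pos (convex_Icc _ _)
      (fun x hx => (hderiv x (hsub hx)).continuousAt.continuousWithinAt)
      (fun x hx => (hderiv x (hsub (interior_subset hx))).hasDerivWithinAt) fun x hx => ?_
    rw [interior_Icc] at hx
    exact psiSeries_pos hx.1 (by linarith [hx.2]) (j + 1)
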